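/- Let 𝒞=(C,w) be a positive-weighted caterpillar with V(C)={1,...,n}, let x₁,x₂ be the endpoints of the spine of C, and let X₁ (respectively X₂) be the set of leaves of C adjacent to x₁ (respectively x₂). If a,b ∈ V(C) are such that D_{a,b}(𝒞) − t_a − t_b = max_{i,j ∈ [n]} { D_{i,j}(𝒞) − t_i − t_j }, then a ∈ X₁∪{x₁} and b ∈ X₂∪{x₂}, or vice versa. -/

import Mathlib

open SimpleGraph

variable {V : Type*}

/-- weight of a walk: sum of the weights of its edges -/
noncomputable def walkWeight (G : SimpleGraph V) (w : Sym2 V → ℝ) {i j : V} (p : G.Walk i j) : ℝ :=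
  (p.edges.map w).sum

/-- the 2-weight: min over paths joining i and j -/
noncomputable def wdist (G : SimpleGraph V) (w : Sym2 V → ℝ) (i j : V) : ℝ :=
  sInf {x : ℝ | ∃ p : G.Walk i j, p.IsPath ∧ walkWeight G w p = x}

def Realizes (G : SimpleGraph V) (w : Sym2 V → ℝ) {i j : V} (p : G.Walk i j) : Prop :=
  p.IsPath ∧ walkWeight G w p = wdist G w i j

def UsefulEdge (G : SimpleGraph V) (w : Sym2 V → ℝ) (e : Sym2 V) : Prop :=
  ∃ a b : V, a ≠ b ∧ ∀ p : G.Walk a b, Realizes G w p → e ∈ p.edges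

def Pruned (G : SimpleGraph V) (w : Sym2 V → ℝ) : Prop :=
  ∀ e ∈ G.edgeSet, UsefulEdge G w e

def PosWeights (G : SimpleGraph V) (w : Sym2 V → ℝ) : Prop :=
  ∀ e ∈ G.edgeSet, 0 < w e

def Indec (G : SimpleGraph V) (w : Sym2 V → ℝ) (i j : V) : Prop :=
  ∀ z : V, z ≠ i → z ≠ j → wdist G w i j < wdist G w i z + wdist G w z j

def IsLeaf (G : SimpleGraph V) (v : V) : Prop := (G.neighborSet v).ncard = 1

def IsSnake (G : SimpleGraph V) : Prop :=
  G.IsTree ∧ {v : V | IsLeaf G v}.ncard = 2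

def IsCaterpillar (G : SimpleGraph V) : Prop :=
  G.IsTree ∧ ∃ (x₁ x₂ : V) (p : G.Walk x₁ x₂), p.IsPath ∧
    {v : V | v ∈ p.support} = {v : V | 2 ≤ (G.neighborSet v).ncard}

def IsPolygon {n : ℕ} [NeZero n] (G : SimpleGraph (Fin n)) : Prop :=
  ∃ σ : Equiv.Perm (Fin n), G.edgeSet = Set.range (fun i : Fin n => s(σ i, σ (i + 1)))

noncomputable def tmin (G : SimpleGraph V) (w : Sym2 V → ℝ) (x : V) : ℝ :=
  (1 / 2) * sInf {r : ℝ | ∃ y z : V, y ≠ x ∧ z ≠ x ∧ y ≠ z ∧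
    r = wdist G w x y + wdist G w x z - wdist G w y z}

def IsBipartiteOn (G : SimpleGraph V) (X Y : Set V) : Prop :=
  X ∩ Y = ∅ ∧ X ∪ Y = Set.univ ∧ ∀ a b : V, G.Adj a b → (a ∈ X ∧ b ∈ Y) ∨ (a ∈ Y ∧ b ∈ X)

noncomputable def chainSum {α : Type*} (D : α → α → ℝ) : List α → ℝ
  | [] => 0
  | [_] => 0
  | a :: b :: l => D a b + chainSum D (b :: l)

def FIndec {n : ℕ} (D : Fin n → Fin n → ℝ) (i j : Fin n) : Prop :=
  ∀ z : Fin n, z ≠ i → z ≠ j → D i j < D i z + D z j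

def TriangleIneq {n : ℕ} (D : Fin n → Fin n → ℝ) : Prop :=
  ∀ i j k : Fin n, i ≠ j → j ≠ k → i ≠ k → D i j ≤ D i k + D k j

def MaxTwice (x y z : ℝ) : Prop :=
  (x = y ∧ z ≤ x) ∨ (x = z ∧ y ≤ x) ∨ (y = z ∧ x ≤ y)

def FourPoint {n : ℕ} (D : Fin n → Fin n → ℝ) : Prop :=
  ∀ i j k h : Fin n, i ≠ j → i ≠ k → i ≠ h → j ≠ k → j ≠ h → k ≠ h →
    MaxTwice (D i j + D k h) (D i k + D j h) (D i h + D k j)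

def MedianFamily {n : ℕ} (D : Fin n → Fin n → ℝ) : Prop :=
  ∀ a b c : Fin n, ∃! m : Fin n,
    ∀ i ∈ ({a, b, c} : Set (Fin n)), ∀ j ∈ ({a, b, c} : Set (Fin n)), i ≠ j →
      D i j = D i m + D j m

noncomputable def tminF {n : ℕ} (D : Fin n → Fin n → ℝ) (x : Fin n) : ℝ :=
  (1 / 2) * sInf {r : ℝ | ∃ y z : Fin n, y ≠ x ∧ z ≠ x ∧ y ≠ z ∧ r = D x y + D x z - D y z}

def interiorSet {G : SimpleGraph V} {u v : V} (p : G.Walk u v) : Set V :=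
  {x : V | x ∈ p.support ∧ x ≠ u ∧ x ≠ v}


/-!
In a weighted tree, `t_v = 0` for a vertex of degree at least two (two of its neighbours give the
value `0`, and the triangle inequality bounds every value below by `0`), while for a leaf `v` with
neighbour `u` every path out of `v` passes through `u`, so `t_v = D_{v,u}`. In a caterpillar every
vertex `a` is either a spine vertex `σ_a` or a leaf hanging from one, and for `a ≠ b`
`D_{a,b} - t_a - t_b = D_{σ_a,σ_b}`. This is at most `D_{x₁,x₂}`, the value at the spine ends, with
equality only when `{σ_a, σ_b} = {x₁, x₂}`.
-/

variable {G : SimpleGraph V} {w : Sym2 V → ℝ}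

section Walks

lemma walkWeight_cons {i j k : V} (h : G.Adj i j) (p : G.Walk j k) :
    walkWeight G w (Walk.cons h p) = w s(i, j) + walkWeight G w p := by
  simp [walkWeight]

lemma walkWeight_append {i j k : V} (p : G.Walk i j) (q : G.Walk j k) :
    walkWeight G w (p.append q) = walkWeight G w p + walkWeight G w q := by
  simp [walkWeight, Walk.edges_append]

lemma walkWeight_reverse {i j : V} (p : G.Walk i j) :
    walkWeight G w p.reverse = walkWeight G w p := by
  simp [walkWeight, Walk.edges_reverse, List.sum_reverse]

lemma walkWeight_nonneg (hw : PosWeights G w) {i j : V} (p : G.Walk i j) :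
    0 ≤ walkWeight G w p :=
  List.sum_nonneg <| by simpa using fun e he => (hw e (p.edges_subset_edgeSet he)).le

lemma walkWeight_pos (hw : PosWeights G w) {i j : V} (hij : i ≠ j) (p : G.Walk i j) :
    0 < walkWeight G w p := by
  cases p with
  | nil => exact absurd rfl hij
  | cons h q =>
    rw [walkWeight_cons]
    exact add_pos_of_pos_of_nonneg (hw _ h) (walkWeight_nonneg hw q)

lemma walkWeight_bypass_le [DecidableEq V] (hw : PosWeights G w) {i j : V} (p : G.Walk i j) :
    walkWeight G w p.bypass ≤ walkWeight G w p := by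
  obtain ⟨l, hperm, hsub⟩ :=
    List.subperm_of_subset p.bypass_isPath.edges_nodup p.edges_bypass_subset_edges
  rw [walkWeight, walkWeight, ← (hperm.map w).sum_eq]
  exact (hsub.map w).sum_le_sum <| by
    simpa using fun e he => (hw e (p.edges_subset_edgeSet he)).le

end Walks

section Trees

lemma wdist_eq_walkWeight (ht : G.IsTree) {i j : V} {P : G.Walk i j} (hP : P.IsPath) :
    wdist G w i j = walkWeight G w P := by
  have hpaths : {x : ℝ | ∃ p : G.Walk i j, p.IsPath ∧ walkWeight G w p = x} =
      {walkWeight G w P} := by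
    ext x
    constructor
    · rintro ⟨q, hq, rfl⟩
      rw [(ht.existsUnique_path i j).unique hq hP, Set.mem_singleton_iff]
    · rintro rfl
      exact ⟨P, hP, rfl⟩
  rw [wdist, hpaths, csInf_singleton]

lemma wdist_self (ht : G.IsTree) (i : V) : wdist G w i i = 0 := by
  rw [wdist_eq_walkWeight ht Walk.IsPath.nil]
  simp [walkWeight]

lemma wdist_comm (ht : G.IsTree) (i j : V) : wdist G w i j = wdist G w j i := by
  obtain ⟨P, hP, -⟩ := ht.existsUnique_path i j
  rw [wdist_eq_walkWeight ht hP, wdist_eq_walkWeight ht hP.reverse, walkWeight_reverse]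

lemma wdist_nonneg (ht : G.IsTree) (hw : PosWeights G w) (i j : V) : 0 ≤ wdist G w i j := by
  obtain ⟨P, hP, -⟩ := ht.existsUnique_path i j
  exact (wdist_eq_walkWeight ht hP).symm ▸ walkWeight_nonneg hw P

lemma wdist_le_zero_iff (ht : G.IsTree) (hw : PosWeights G w) {i j : V} :
    wdist G w i j ≤ 0 ↔ i = j := by
  refine ⟨fun h => by_contra fun hij => ?_, fun h => h ▸ (wdist_self ht i).le⟩
  obtain ⟨P, hP, -⟩ := ht.existsUnique_path i j
  exact h.not_gt ((wdist_eq_walkWeight ht hP).symm ▸ walkWeight_pos hw hij P)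

lemma wdist_triangle (ht : G.IsTree) (hw : PosWeights G w) (i j k : V) :
    wdist G w i k ≤ wdist G w i j + wdist G w j k := by
  classical
  obtain ⟨P, hP, -⟩ := ht.existsUnique_path i j
  obtain ⟨Q, hQ, -⟩ := ht.existsUnique_path j k
  rw [wdist_eq_walkWeight ht hP, wdist_eq_walkWeight ht hQ,
    wdist_eq_walkWeight ht (P.append Q).bypass_isPath, ← walkWeight_append]
  exact walkWeight_bypass_le hw _

lemma wdist_eq_add_of_mem_support (ht : G.IsTree) {i j k : V} {P : G.Walk i k} (hP : P.IsPath)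
    (hj : j ∈ P.support) : wdist G w i k = wdist G w i j + wdist G w j k := by
  classical
  rw [wdist_eq_walkWeight ht hP, wdist_eq_walkWeight ht (hP.takeUntil hj),
    wdist_eq_walkWeight ht (hP.dropUntil hj), ← walkWeight_append, Walk.take_spec]

lemma wdist_ends_eq_add_add_of_mem_support (ht : G.IsTree) {x₁ x₂ u v : V} {p : G.Walk x₁ x₂}
    (hp : p.IsPath) (hu : u ∈ p.support) (hv : v ∈ p.support) :
    wdist G w x₁ x₂ = wdist G w x₁ u + wdist G w u v + wdist G w v x₂ ∨
      wdist G w x₁ x₂ = wdist G w x₁ v + wdist G w v u + wdist G w u x₂ := by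
  classical
  have hsplit := wdist_eq_add_of_mem_support (w := w) ht hp hu
  rw [← p.take_spec hu, Walk.mem_support_append_iff] at hv
  rcases hv with hv | hv
  · rw [wdist_eq_add_of_mem_support ht (hp.takeUntil hu) hv] at hsplit
    exact Or.inr hsplit
  · rw [wdist_eq_add_of_mem_support ht (hp.dropUntil hu) hv, ← add_assoc] at hsplit
    exact Or.inl hsplit

lemma eq_ends_of_wdist_ends_le (ht : G.IsTree) (hw : PosWeights G w) {x₁ x₂ u v : V}
    {p : G.Walk x₁ x₂} (hp : p.IsPath) (hu : u ∈ p.support) (hv : v ∈ p.support)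
    (hle : wdist G w x₁ x₂ ≤ wdist G w u v) : (u = x₁ ∧ v = x₂) ∨ (v = x₁ ∧ u = x₂) := by
  have h₁ := wdist_nonneg ht hw x₁ u
  have h₂ := wdist_nonneg ht hw x₁ v
  have h₃ := wdist_nonneg ht hw u x₂
  have h₄ := wdist_nonneg ht hw v x₂
  have hcomm := wdist_comm (w := w) ht u v
  rcases wdist_ends_eq_add_add_of_mem_support ht hp hu hv with h | h
  · exact Or.inl ⟨((wdist_le_zero_iff ht hw).1 (by linarith)).symm,
      (wdist_le_zero_iff ht hw).1 (by linarith)⟩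
  · exact Or.inr ⟨((wdist_le_zero_iff ht hw).1 (by linarith)).symm,
      (wdist_le_zero_iff ht hw).1 (by linarith)⟩

end Trees

section Leaves

lemma neighborSet_eq_singleton_of_isLeaf {v u : V} (hleaf : IsLeaf G v) (hu : G.Adj v u) :
    G.neighborSet v = {u} := by
  obtain ⟨a, ha⟩ := Set.ncard_eq_one.mp hleaf
  rw [ha, Set.mem_singleton_iff.mp (ha ▸ hu : u ∈ ({a} : Set V))]

lemma wdist_eq_add_of_isLeaf (ht : G.IsTree) {v u z : V} (hleaf : IsLeaf G v) (hu : G.Adj v u)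
    (hz : z ≠ v) : wdist G w v z = wdist G w v u + wdist G w u z := by
  obtain ⟨P, hP, -⟩ := ht.existsUnique_path v z
  cases P with
  | nil => exact absurd rfl hz
  | @cons _ b _ hb q =>
    have hbu : b ∈ G.neighborSet v := hb
    rw [neighborSet_eq_singleton_of_isLeaf hleaf hu, Set.mem_singleton_iff] at hbu
    subst hbu
    exact wdist_eq_add_of_mem_support ht hP (by simp)

lemma two_le_ncard_neighborSet_of_isLeaf [Finite V] (ht : G.IsTree) {v u z : V}
    (hleaf : IsLeaf G v) (hu : G.Adj v u) (hzv : z ≠ v) (hzu : z ≠ u) :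
    2 ≤ (G.neighborSet u).ncard := by
  obtain ⟨P, hP, -⟩ := ht.existsUnique_path v z
  cases P with
  | nil => exact absurd rfl hzv
  | @cons _ b _ hb q =>
    have hbu : b ∈ G.neighborSet v := hb
    rw [neighborSet_eq_singleton_of_isLeaf hleaf hu, Set.mem_singleton_iff] at hbu
    subst hbu
    cases q with
    | nil => exact absurd rfl hzu
    | @cons _ c _ hc q' =>
      have hcv : c ≠ v := by
        rintro rfl
        simp [Walk.cons_isPath_iff] at hP
      exact (Set.one_lt_ncard_iff (Set.toFinite _)).mpr ⟨v, c, hu.symm, hc, hcv.symm⟩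

end Leaves

section Tmin

lemma tmin_eq_half_of_isLeast {x : V} {c : ℝ}
    (hc : IsLeast {r : ℝ | ∃ y z : V, y ≠ x ∧ z ≠ x ∧ y ≠ z ∧
      r = wdist G w x y + wdist G w x z - wdist G w y z} c) :
    tmin G w x = c / 2 := by
  rw [tmin, hc.csInf_eq]
  ring

lemma tmin_eq_zero_of_two_le_ncard (ht : G.IsTree) (hw : PosWeights G w) {x : V}
    (hdeg : 2 ≤ (G.neighborSet x).ncard) : tmin G w x = 0 := by
  obtain ⟨y, z, hy, hz, hyz⟩ :=
    (Set.one_lt_ncard_iff (Set.finite_of_ncard_pos (by omega))).mp hdeg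
  have hxy : G.Adj x y := hy
  have hxz : G.Adj x z := hz
  have hpath : (Walk.cons hxy.symm (Walk.cons hxz Walk.nil)).IsPath := by
    simp [Walk.cons_isPath_iff, hxy.ne', hxz.ne, hyz]
  have hyxz := wdist_eq_add_of_mem_support (w := w) (j := x) ht hpath (by simp)
  rw [tmin_eq_half_of_isLeast (c := 0), zero_div]
  refine ⟨⟨y, z, hxy.ne', hxz.ne', hyz, ?_⟩, ?_⟩
  · rw [hyxz, wdist_comm ht y x]; ring
  · rintro r ⟨y', z', -, -, -, rfl⟩
    have := wdist_triangle ht hw y' x z'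
    rw [wdist_comm ht y' x] at this
    linarith

lemma tmin_of_isLeaf (ht : G.IsTree) (hw : PosWeights G w) {v u z : V} (hleaf : IsLeaf G v)
    (hu : G.Adj v u) (hzv : z ≠ v) (hzu : z ≠ u) : tmin G w v = wdist G w v u := by
  rw [tmin_eq_half_of_isLeast (c := 2 * wdist G w v u), mul_div_cancel_left₀ _ two_ne_zero]
  refine ⟨⟨u, z, hu.ne', hzv, hzu.symm, ?_⟩, ?_⟩
  · rw [wdist_eq_add_of_isLeaf ht hleaf hu hzv]; ring
  · rintro r ⟨y', z', hy', hz', -, rfl⟩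
    have := wdist_triangle ht hw y' u z'
    rw [wdist_comm ht y' u] at this
    rw [wdist_eq_add_of_isLeaf ht hleaf hu hy',
      wdist_eq_add_of_isLeaf ht hleaf hu hz']
    linarith

end Tmin

section Caterpillars

/-- The paper's `Xᵢ ∪ {xᵢ}` for a spine vertex `x = xᵢ`. -/
def leafStar (G : SimpleGraph V) (x : V) : Set V :=
  insert x {v : V | IsLeaf G v ∧ G.Adj v x}

lemma eq_of_mem_leafStar {v σ : V} (hv : v ∈ leafStar G σ) (hdeg : 2 ≤ (G.neighborSet v).ncard) :
    v = σ := by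
  rcases hv with hv | ⟨hleaf, -⟩
  · exact hv
  · exact absurd hleaf (by unfold IsLeaf; omega)

lemma exists_ne_ne_of_three_le_card [Fintype V] (hV : 3 ≤ Fintype.card V) (a b : V) :
    ∃ c, c ≠ a ∧ c ≠ b := by
  classical
  obtain ⟨c, hc, hcb⟩ := Finset.exists_mem_ne (s := Finset.univ.erase a)
    (by rw [Finset.card_erase_of_mem (Finset.mem_univ a), Finset.card_univ]; omega) b
  exact ⟨c, Finset.ne_of_mem_erase hc, hcb⟩

lemma exists_mem_leafStar [Fintype V] (ht : G.IsTree) (hV : 3 ≤ Fintype.card V) (v : V) :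
    ∃ σ, 2 ≤ (G.neighborSet σ).ncard ∧ v ∈ leafStar G σ := by
  by_cases hv : 2 ≤ (G.neighborSet v).ncard
  · exact ⟨v, hv, Set.mem_insert v _⟩
  obtain ⟨z, hzv, -⟩ := exists_ne_ne_of_three_le_card hV v v
  obtain ⟨P, -, -⟩ := ht.existsUnique_path v z
  obtain ⟨u, hu⟩ : ∃ u, G.Adj v u := by
    cases P with
    | nil => exact absurd rfl hzv
    | cons h _ => exact ⟨_, h⟩
  have hleaf : IsLeaf G v := by
    have hpos : 0 < (G.neighborSet v).ncard := (Set.ncard_pos (Set.toFinite _)).mpr ⟨u, hu⟩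
    unfold IsLeaf
    omega
  obtain ⟨z₀, hz₀v, hz₀u⟩ := exists_ne_ne_of_three_le_card hV v u
  exact ⟨u, two_le_ncard_neighborSet_of_isLeaf ht hleaf hu hz₀v hz₀u,
    Or.inr ⟨hleaf, hu⟩⟩

lemma tmin_eq_wdist_of_mem_leafStar (ht : G.IsTree) (hw : PosWeights G w) {v σ : V}
    (hσ : 2 ≤ (G.neighborSet σ).ncard) (hv : v ∈ leafStar G σ) :
    tmin G w v = wdist G w v σ := by
  rcases hv with rfl | ⟨hleaf, hvσ⟩
  · rw [tmin_eq_zero_of_two_le_ncard ht hw hσ, wdist_self ht]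
  · obtain ⟨z, hz, hzv⟩ := Set.exists_ne_of_one_lt_ncard hσ v
    exact tmin_of_isLeaf ht hw hleaf hvσ hzv (G.ne_of_adj hz).symm

lemma wdist_eq_add_of_mem_leafStar (ht : G.IsTree) {v σ z : V} (hv : v ∈ leafStar G σ)
    (hz : z ≠ v) : wdist G w v z = wdist G w v σ + wdist G w σ z := by
  rcases hv with rfl | ⟨hleaf, hvσ⟩
  · rw [wdist_self ht, zero_add]
  · exact wdist_eq_add_of_isLeaf ht hleaf hvσ hz

lemma wdist_sub_tmin_sub_tmin (ht : G.IsTree) (hw : PosWeights G w) {a b σa σb : V}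
    (hσa : 2 ≤ (G.neighborSet σa).ncard) (ha : a ∈ leafStar G σa)
    (hσb : 2 ≤ (G.neighborSet σb).ncard) (hb : b ∈ leafStar G σb) (hab : a ≠ b) :
    wdist G w a b - tmin G w a - tmin G w b = wdist G w σa σb := by
  rw [tmin_eq_wdist_of_mem_leafStar ht hw hσa ha, tmin_eq_wdist_of_mem_leafStar ht hw hσb hb,
    wdist_eq_add_of_mem_leafStar ht ha hab.symm]
  obtain rfl | hσab := eq_or_ne σa b
  · obtain rfl := eq_of_mem_leafStar hb hσa
    rw [wdist_self ht]
    ring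
  · rw [wdist_comm ht σa b, wdist_eq_add_of_mem_leafStar ht hb hσab, wdist_comm ht σb σa]
    ring

end Caterpillars

/-- In a positive-weighted caterpillar with spine from `x₁` to `x₂`, if `a, b` maximize
`D i j - t i - t j`, then `a` belongs to `X₁ ∪ {x₁}` and `b` to `X₂ ∪ {x₂}` or vice versa,
where `Xᵢ` is the set of leaves adjacent to `xᵢ`. -/
theorem stmt_3 {n : ℕ} (hn : 3 ≤ n) (C : SimpleGraph (Fin n)) (htree : C.IsTree)
    (w : Sym2 (Fin n) → ℝ) (hw : PosWeights C w)
    (x₁ x₂ : Fin n) (p : C.Walk x₁ x₂) (hp : p.IsPath)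
    (hspine : {v : Fin n | v ∈ p.support} = {v : Fin n | 2 ≤ (C.neighborSet v).ncard})
    (a b : Fin n) (hab : a ≠ b)
    (hmax : ∀ i j : Fin n, i ≠ j →
      wdist C w i j - tmin C w i - tmin C w j ≤ wdist C w a b - tmin C w a - tmin C w b) :
    (a ∈ insert x₁ {v : Fin n | IsLeaf C v ∧ C.Adj v x₁} ∧
        b ∈ insert x₂ {v : Fin n | IsLeaf C v ∧ C.Adj v x₂}) ∨
      (b ∈ insert x₁ {v : Fin n | IsLeaf C v ∧ C.Adj v x₁} ∧
        a ∈ insert x₂ {v : Fin n | IsLeaf C v ∧ C.Adj v x₂}) := by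
  have hspine' (v : Fin n) : v ∈ p.support ↔ 2 ≤ (C.neighborSet v).ncard := Set.ext_iff.mp hspine v
  have hV : 3 ≤ Fintype.card (Fin n) := by simpa using hn
  obtain ⟨σa, hσa, ha⟩ := exists_mem_leafStar htree hV a
  obtain ⟨σb, hσb, hb⟩ := exists_mem_leafStar htree hV b
  have hval := wdist_sub_tmin_sub_tmin htree hw hσa ha hσb hb hab
  have hends : wdist C w x₁ x₂ ≤ wdist C w σa σb := by
    obtain rfl | hx := eq_or_ne x₁ x₂
    · exact (wdist_self htree x₁).symm ▸ wdist_nonneg htree hw σa σb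
    · have := hmax x₁ x₂ hx
      rwa [tmin_eq_zero_of_two_le_ncard htree hw ((hspine' x₁).1 p.start_mem_support),
        tmin_eq_zero_of_two_le_ncard htree hw ((hspine' x₂).1 p.end_mem_support), hval,
        sub_zero, sub_zero] at this
  rcases eq_ends_of_wdist_ends_le htree hw hp ((hspine' σa).2 hσa) ((hspine' σb).2 hσb) hends with
    ⟨rfl, rfl⟩ | ⟨rfl, rfl⟩
  · exact Or.inl ⟨ha, hb⟩
  · exact Or.inr ⟨hb, ha⟩
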